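/- Let D be an outer k-planar drawing of a graph G and let {u, v} be a pair of distinct vertices such that some edge {l, r} of G pierces {u, v} in D. Then there are at most k+2 internally vertex-disjoint paths between u and v in G. -/

import Mathlib

open Function

/-- Position of the lower endpoint of an edge in a circular drawing given by
vertex positions `π`. -/
def elo {V : Type*} (π : V → ℕ) : Sym2 V → ℕ :=
  Sym2.lift ⟨fun a b => min (π a) (π b), fun a b => min_comm (π a) (π b)⟩

/-- Position of the upper endpoint of an edge in a circular drawing. -/
def ehi {V : Type*} (π : V → ℕ) : Sym2 V → ℕ :=
  Sym2.lift ⟨fun a b => max (π a) (π b), fun a b => max_comm (π a) (π b)⟩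

/-- Two edges (or vertex pairs) cross (equivalently, the first pierces the
second) in the circular drawing given by positions `π`:
`i < i' < j < j'` or `i' < i < j' < j`. -/
def ecross {V : Type*} (π : V → ℕ) (e f : Sym2 V) : Prop :=
  (elo π e < elo π f ∧ elo π f < ehi π e ∧ ehi π e < ehi π f) ∨
  (elo π f < elo π e ∧ elo π e < ehi π f ∧ ehi π f < ehi π e)

/-- The number of edges of `G` crossing `e` in the circular drawing `π`. -/
noncomputable def crossNum {V : Type*} (G : SimpleGraph V) (π : V → ℕ)
    (e : Sym2 V) : ℕ :=
  {f | f ∈ G.edgeSet ∧ ecross π e f}.ncard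

/-- `π` is an outer `k`-planar drawing of `G`: an injective assignment of
positions (a circular order) such that every edge crosses at most `k` edges. -/
def IsOuterKPlanar {V : Type*} (G : SimpleGraph V) (k : ℕ) (π : V → ℕ) : Prop :=
  Injective π ∧ ∀ e ∈ G.edgeSet, crossNum G π e ≤ k

/-!
Every path between `u` and `v` either passes through `l`, or through `r`, or avoids both; in the
last case it must leave the arc of the circle cut off by `{l, r}` that contains exactly one of
`u, v`, so it uses an edge crossing `{l, r}`. Internal disjointness allows at most one path
through `l` and one through `r`, and forces distinct paths to use distinct edges (two paths can
only share the edge `{u, v}`, and then both are that edge). Hence there are at most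
`1 + 1 + k` paths.
-/

open Finset SimpleGraph

section Drawing

variable {V : Type*} (π : V → ℕ)

lemma elo_mk (a b : V) : elo π s(a, b) = min (π a) (π b) := rfl

lemma ehi_mk (a b : V) : ehi π s(a, b) = max (π a) (π b) := rfl

lemma elo_le_ehi (e : Sym2 V) : elo π e ≤ ehi π e := by
  induction e using Sym2.ind with
  | h a b => simp only [elo_mk, ehi_mk]; omega

def IsBetween (e : Sym2 V) (x : V) : Prop :=
  elo π e < π x ∧ π x < ehi π e

lemma ecross_mk_iff {e : Sym2 V} {x y : V}
    (hx : π x ≠ elo π e ∧ π x ≠ ehi π e) (hy : π y ≠ elo π e ∧ π y ≠ ehi π e) :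
    ecross π e s(x, y) ↔ ¬(IsBetween π e x ↔ IsBetween π e y) := by
  have := elo_le_ehi π e
  simp only [ecross, elo_mk, ehi_mk, IsBetween]
  omega

lemma ne_of_ecross_mk_mk {l r u v : V} (h : ecross π s(l, r) s(u, v)) :
    l ≠ u ∧ l ≠ v ∧ r ≠ u ∧ r ≠ v := by
  simp only [ecross, elo_mk, ehi_mk] at h
  refine ⟨?_, ?_, ?_, ?_⟩ <;> (rintro rfl; omega)

variable {π} {G : SimpleGraph V}

lemma SimpleGraph.Walk.exists_mem_edges_ecross {e : Sym2 V} {a b : V} (w : G.Walk a b)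
    (havoid : ∀ x ∈ w.support, π x ≠ elo π e ∧ π x ≠ ehi π e)
    (hab : ¬(IsBetween π e a ↔ IsBetween π e b)) :
    ∃ f ∈ w.edges, ecross π e f := by
  induction w with
  | nil => exact absurd Iff.rfl hab
  | @cons a c b hac w ih =>
    have hsupp : ∀ x ∈ w.support, π x ≠ elo π e ∧ π x ≠ ehi π e :=
      fun x hx => havoid x (by simp [hx])
    by_cases hc : IsBetween π e a ↔ IsBetween π e c
    · obtain ⟨f, hf, hcross⟩ := ih hsupp (by rwa [hc] at hab)
      exact ⟨f, by simp [hf], hcross⟩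
    · refine ⟨s(a, c), by simp, ?_⟩
      exact (ecross_mk_iff π (havoid a (by simp)) (hsupp c w.start_mem_support)).mpr hc

lemma SimpleGraph.Walk.exists_mem_edges_ecross_of_pierces (hπ : Injective π) {l r u v : V}
    (hpierce : ecross π s(l, r) s(u, v)) (w : G.Walk u v)
    (hl : l ∉ w.support) (hr : r ∉ w.support) :
    ∃ f ∈ w.edges, ecross π s(l, r) f := by
  have havoid : ∀ x ∈ w.support, π x ≠ elo π s(l, r) ∧ π x ≠ ehi π s(l, r) := by
    intro x hx
    have hxl : π x ≠ π l := fun h => hl (hπ h ▸ hx)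
    have hxr : π x ≠ π r := fun h => hr (hπ h ▸ hx)
    simp only [elo_mk, ehi_mk]
    omega
  refine w.exists_mem_edges_ecross havoid ?_
  exact (ecross_mk_iff π (havoid u w.start_mem_support) (havoid v w.end_mem_support)).mp hpierce

end Drawing

section InternallyDisjoint

variable {V ι : Type*} {G : SimpleGraph V} {u v : V}

def PairwiseInternallyDisjoint (P : ι → G.Walk u v) : Prop :=
  Pairwise fun i j => ∀ x ∈ (P i).support, x ∈ (P j).support → x = u ∨ x = v

variable {P : ι → G.Walk u v}

lemma PairwiseInternallyDisjoint.card_filter_mem_support_le_one [Fintype ι] [DecidableEq V]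
    (hP : PairwiseInternallyDisjoint P) {x : V} (hxu : x ≠ u) (hxv : x ≠ v) :
    #{i | x ∈ (P i).support} ≤ 1 := by
  refine card_le_one.mpr fun i hi j hj => ?_
  by_contra hij
  simp only [mem_filter, mem_univ, true_and] at hi hj
  rcases hP hij x hi hj with rfl | rfl <;> contradiction

/-- Two paths of the family share an edge only if it is `{u, v}`, and a `u`–`v` path through
the edge `{u, v}` is that edge. -/
lemma PairwiseInternallyDisjoint.eq_of_mem_edges (hP : PairwiseInternallyDisjoint P)
    (hpath : ∀ i, (P i).IsPath) (hinj : Injective P) {e : Sym2 V} {i j : ι}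
    (hi : e ∈ (P i).edges) (hj : e ∈ (P j).edges) : i = j := by
  by_contra hij
  induction e using Sym2.ind with
  | h x y =>
    have hxy : x ≠ y := ((P i).adj_of_mem_edges hi).ne
    have huv : s(x, y) = s(u, v) := by
      rcases hP hij x ((P i).fst_mem_support_of_mem_edges hi)
          ((P j).fst_mem_support_of_mem_edges hj) with rfl | rfl <;>
        rcases hP hij y ((P i).snd_mem_support_of_mem_edges hi)
          ((P j).snd_mem_support_of_mem_edges hj) with rfl | rfl
      all_goals first | exact absurd rfl hxy | rfl | exact Sym2.eq_swap
    rw [huv] at hi hj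
    exact hij (hinj (((hpath i).eq_adj_toWalk_of_mem_edges hi).trans
      ((hpath j).eq_adj_toWalk_of_mem_edges hj).symm))

lemma PairwiseInternallyDisjoint.card_le_of_forall_exists_mem_edges
    (hP : PairwiseInternallyDisjoint P) (hpath : ∀ i, (P i).IsPath) (hinj : Injective P)
    {S : Finset ι} {F : Finset (Sym2 V)} (hS : ∀ i ∈ S, ∃ f ∈ F, f ∈ (P i).edges) :
    #S ≤ #F := by
  classical
  calc #S ≤ #(S.biUnion fun i => {f ∈ F | f ∈ (P i).edges}) := by
        refine card_le_card_biUnion (fun i _ j _ hij => ?_) fun i hi => ?_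
        · refine disjoint_left.mpr fun f hfi hfj => hij ?_
          exact hP.eq_of_mem_edges hpath hinj (mem_filter.mp hfi).2 (mem_filter.mp hfj).2
        · obtain ⟨f, hf, hfi⟩ := hS i hi
          exact ⟨f, mem_filter.mpr ⟨hf, hfi⟩⟩
    _ ≤ #F := card_le_card (biUnion_subset.mpr fun _ _ => filter_subset _ _)

end InternallyDisjoint

theorem stmt15_general {V : Type*} [Fintype V] (G : SimpleGraph V) (k : ℕ)
    (π : V → ℕ) (hD : IsOuterKPlanar G k π)
    (u v : V) (l r : V) (hlr : G.Adj l r)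
    (hpierce : ecross π s(l, r) s(u, v))
    (m : ℕ) (P : Fin m → G.Walk u v)
    (hpath : ∀ i, (P i).IsPath) (hinj : Function.Injective P)
    (hdisj : ∀ i j, i ≠ j → ∀ x, x ∈ (P i).support → x ∈ (P j).support →
      x = u ∨ x = v) :
    m ≤ k + 2 := by
  classical
  obtain ⟨hπ, hk⟩ := hD
  have hP : PairwiseInternallyDisjoint P := hdisj
  obtain ⟨hlu, hlv, hru, hrv⟩ := ne_of_ecross_mk_mk π hpierce
  set F := {f | f ∈ G.edgeSet ∧ ecross π s(l, r) f}.toFinset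
  have hF : #F ≤ k := by
    rw [← Set.ncard_eq_toFinset_card']
    exact hk _ hlr
  have hrest : #{i | l ∉ (P i).support ∧ r ∉ (P i).support} ≤ #F := by
    refine hP.card_le_of_forall_exists_mem_edges hpath hinj fun i hi => ?_
    obtain ⟨hl, hr⟩ := (mem_filter.mp hi).2
    obtain ⟨f, hf, hcross⟩ := (P i).exists_mem_edges_ecross_of_pierces hπ hpierce hl hr
    exact ⟨f, Set.mem_toFinset.mpr ⟨(P i).edges_subset_edgeSet hf, hcross⟩, hf⟩
  calc m = #(univ : Finset (Fin m)) := (card_fin m).symm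
    _ ≤ #(({i | l ∈ (P i).support} : Finset _) ∪ ({i | r ∈ (P i).support} : Finset _) ∪
          ({i | l ∉ (P i).support ∧ r ∉ (P i).support} : Finset _)) :=
        card_le_card fun i _ => by simp only [mem_union, mem_filter, mem_univ, true_and]; tauto
    _ ≤ 1 + 1 + k := by
        grw [card_union_le, card_union_le, hP.card_filter_mem_support_le_one hlu hlv,
          hP.card_filter_mem_support_le_one hru hrv, hrest, hF]
    _ = k + 2 := by ring

/-- If in an outer `k`-planar drawing some edge `{l, r}` of `G` pierces the
vertex pair `{u, v}`, then there are at most `k+2` pairwise internally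
vertex-disjoint paths between `u` and `v`. -/
theorem stmt15 {V : Type*} [Fintype V] (G : SimpleGraph V) (k : ℕ)
    (π : V → ℕ) (hD : IsOuterKPlanar G k π)
    (u v : V) (huv : u ≠ v) (l r : V) (hlr : G.Adj l r)
    (hpierce : ecross π s(l, r) s(u, v))
    (m : ℕ) (P : Fin m → G.Walk u v)
    (hpath : ∀ i, (P i).IsPath) (hinj : Function.Injective P)
    (hdisj : ∀ i j, i ≠ j → ∀ x, x ∈ (P i).support → x ∈ (P j).support →
      x = u ∨ x = v) :
    m ≤ k + 2 :=
  stmt15_general G k π hD u v l r hlr hpierce m P hpath hinj hdisj
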